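/- arXiv:1201.3474 — 2 statements merged into one kernel-verified Lean document; each statement's English description precedes it below -/
import Mathlib

section
/- Convergence criterion in the Yamasaki space: for u_n, u ∈ D̃, one has ‖u_n - u‖_o → 0 if and only if u_n(x) → u(x) for every x ∈ V and limsup_n Q̃(u_n) ≤ Q̃(u). -/
open scoped ENNReal NNReal BigOperators
open MeasureTheory Filter

/-- A weighted graph `(b,c)` over a vertex set `V`. -/
structure WeightedGraph (V : Type*) where
  b : V → V → ℝ
  c : V → ℝ
  b_nonneg : ∀ x y, 0 ≤ b x y
  b_diag : ∀ x, b x x = 0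
  b_symm : ∀ x y, b x y = b y x
  b_summable : ∀ x, Summable fun y => b x y
  c_nonneg : ∀ x, 0 ≤ c x

/-- Membership in `ℓ²(V,m)`. -/
def MemL2 {V : Type*} (m : V → ℝ) (u : V → ℝ) : Prop :=
  Summable fun x => u x ^ 2 * m x

/-- The inner product of `ℓ²(V,m)`. -/
noncomputable def l2inner {V : Type*} (m : V → ℝ) (u v : V → ℝ) : ℝ :=
  ∑' x, u x * v x * m x

namespace WeightedGraph

variable {V : Type*} (G : WeightedGraph V)

/-- The energy functional `Q̃` with values in `[0,∞]`. -/
noncomputable def energy (u : V → ℝ) : ℝ≥0∞ :=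
  (1 / 2) * ∑' p : V × V, ENNReal.ofReal (G.b p.1 p.2 * (u p.1 - u p.2) ^ 2)
    + ∑' x, ENNReal.ofReal (G.c x * u x ^ 2)

/-- The functions of finite energy (`D̃`). -/
def FiniteEnergy (u : V → ℝ) : Prop := G.energy u < ⊤

/-- The real-valued bilinear energy form (meaningful on functions of finite energy). -/
noncomputable def energyBilin (u v : V → ℝ) : ℝ :=
  (1 / 2) * ∑' p : V × V, G.b p.1 p.2 * (u p.1 - u p.2) * (v p.1 - v p.2)
    + ∑' x, G.c x * u x * v x

/-- The generalized vertex degree. -/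
noncomputable def deg (x : V) : ℝ := (∑' y, G.b x y) + G.c x

/-- The formal Laplacian `L̃` associated with `(b,c)` and the measure `m`. -/
noncomputable def formalL (m : V → ℝ) (u : V → ℝ) (x : V) : ℝ :=
  ((∑' y, G.b x y * (u x - u y)) + G.c x * u x) / m x

/-- Connectedness of the weighted graph: any two vertices are joined by a path of edges. -/
def Connected : Prop :=
  ∀ x y : V, ∃ (n : ℕ) (p : ℕ → V), p 0 = x ∧ p n = y ∧ ∀ i < n, 0 < G.b (p i) (p (i + 1))

/-- The squared distance of the Yamasaki space with base point `o`. -/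
noncomputable def ydistSq (o : V) (u v : V → ℝ) : ℝ :=
  (G.energy (fun x => u x - v x)).toReal + (u o - v o) ^ 2

/-- The domain of the regular Dirichlet form `Q^(D)`: the closure of the finitely
supported functions in `D̃ ∩ ℓ²(V,m)` with respect to the form norm. -/
def regDom (m : V → ℝ) : Set (V → ℝ) :=
  {u | G.FiniteEnergy u ∧ MemL2 m u ∧
    ∃ f : ℕ → V → ℝ, (∀ n, (Function.support (f n)).Finite) ∧
      Filter.Tendsto
        (fun n => (G.energy (fun x => u x - f n x)).toReal + ∑' x, (u x - f n x) ^ 2 * m x)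
        Filter.atTop (nhds 0)}

/-- Transience of a Dirichlet form given by its domain: existence of a strictly positive
reference function `g ∈ ℓ¹(V,m) ∩ ℓ^∞(V)` with `⟨|u|,g⟩ ≤ Q(u)^{1/2}` on the domain. -/
def FormTransient (m : V → ℝ) (dom : Set (V → ℝ)) : Prop :=
  ∃ g : V → ℝ, (∀ x, 0 < g x) ∧ (Summable fun x => g x * m x) ∧ (∃ C, ∀ x, g x ≤ C) ∧
    ∀ u ∈ dom, ∑' x, |u x| * g x * m x ≤ Real.sqrt (G.energyBilin u u)

end WeightedGraph

/-- The data of a Dirichlet form `Q` associated with a weighted graph `(b,c)` on `ℓ²(V,m)`,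
together with its semigroup `T t = e^{-tL}` and resolvent `R α = (L+α)^{-1}`, with the
standard properties: `Q` is a restriction of `Q̃` with `D(Q^(D)) ⊆ D(Q) ⊆ D(Q^(N))`,
the semigroup is symmetric, Markovian, positivity preserving, the resolvent is characterized
by the form, and the resolvent is the Laplace transform of the semigroup. -/
structure FormSetup {V : Type*} (G : WeightedGraph V) (m : V → ℝ) where
  dom : Set (V → ℝ)
  dom_fe : ∀ u ∈ dom, G.FiniteEnergy u
  dom_l2 : ∀ u ∈ dom, MemL2 m u
  reg_sub : G.regDom m ⊆ dom
  T : ℝ → (V → ℝ) → V → ℝ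
  R : ℝ → (V → ℝ) → V → ℝ
  T_linear : ∀ t, IsLinearMap ℝ (T t)
  R_linear : ∀ α, IsLinearMap ℝ (R α)
  T_semigroup : ∀ s t : ℝ, 0 < s → 0 < t → ∀ f, T (s + t) f = T s (T t f)
  T_l2 : ∀ t : ℝ, 0 < t → ∀ f, MemL2 m f → MemL2 m (T t f)
  T_symm : ∀ t : ℝ, 0 < t → ∀ f g, MemL2 m f → MemL2 m g →
    l2inner m (T t f) g = l2inner m f (T t g)
  T_contraction : ∀ t : ℝ, 0 < t → ∀ f, MemL2 m f →
    ∑' x, T t f x ^ 2 * m x ≤ ∑' x, f x ^ 2 * m x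
  T_pos : ∀ t : ℝ, 0 < t → ∀ f, (∀ x, 0 ≤ f x) → ∀ x, 0 ≤ T t f x
  T_markov : ∀ t : ℝ, 0 < t → ∀ f, (∀ x, 0 ≤ f x ∧ f x ≤ 1) →
    ∀ x, 0 ≤ T t f x ∧ T t f x ≤ 1
  T_cont : ∀ f, MemL2 m f → ∀ x, ContinuousOn (fun t => T t f x) (Set.Ioi (0 : ℝ))
  R_mem : ∀ α : ℝ, 0 < α → ∀ f, MemL2 m f → R α f ∈ dom
  R_pos : ∀ α : ℝ, 0 < α → ∀ f, (∀ x, 0 ≤ f x) → ∀ x, 0 ≤ R α f x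
  R_char : ∀ α : ℝ, 0 < α → ∀ f, MemL2 m f → ∀ v ∈ dom,
    G.energyBilin (R α f) v + α * l2inner m (R α f) v = l2inner m f v
  R_laplace : ∀ α : ℝ, 0 < α → ∀ f, MemL2 m f → (∀ x, 0 ≤ f x) → ∀ y,
    ENNReal.ofReal (R α f y) =
      ∫⁻ t in Set.Ioi (0 : ℝ), ENNReal.ofReal (Real.exp (-α * t) * T t f y)

namespace FormSetup

variable {V : Type*} {G : WeightedGraph V} {m : V → ℝ}

open scoped Classical in
/-- The Green function `G(x,y) = ∫₀^∞ (e^{-tL} δ_x)(y) dt`, with values in `[0,∞]`. -/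
noncomputable def green (S : FormSetup G m) (x y : V) : ℝ≥0∞ :=
  ∫⁻ t in Set.Ioi (0 : ℝ), ENNReal.ofReal (S.T t (fun z => if z = x then 1 else 0) y)

/-- The extended Dirichlet space `D(Q)_e`: functions which are pointwise limits of
`Q`-Cauchy sequences from `D(Q)`. -/
def extDom (S : FormSetup G m) : Set (V → ℝ) :=
  {u | ∃ f : ℕ → V → ℝ, (∀ n, f n ∈ S.dom) ∧
    (∀ ε > (0 : ℝ), ∃ N, ∀ p ≥ N, ∀ q ≥ N,
      G.energyBilin (fun x => f p x - f q x) (fun x => f p x - f q x) < ε) ∧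
    ∀ x, Filter.Tendsto (fun n => f n x) Filter.atTop (nhds (u x))}

/-- Stochastic completeness: the resolvent `(L+1)^{-1}`, extended to `ℓ^∞(V)` by monotone
limits, maps the constant function `1` to `1`. -/
def StochComplete (S : FormSetup G m) : Prop :=
  ∀ f : ℕ → V → ℝ, (∀ n, MemL2 m (f n)) →
    (∀ n x, 0 ≤ f n x ∧ f n x ≤ f (n + 1) x ∧ f n x ≤ 1) →
    (∀ x, Filter.Tendsto (fun n => f n x) Filter.atTop (nhds 1)) →
    ∀ x, Filter.Tendsto (fun n => S.R 1 (f n) x) Filter.atTop (nhds 1)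

end FormSetup

/-! The energy `Q̃` is a quadratic form in the sense of the parallelogram law, and by Fatou it is
lower semicontinuous for pointwise convergence. For such a form and `u n → v` pointwise, the law
`Q̃ (u n - v) + Q̃ (u n + v) = 2 Q̃ (u n) + 2 Q̃ v` together with `Q̃ (2v) ≤ liminf Q̃ (u n + v)`
gives `Q̃ (u n - v) → 0` from `limsup Q̃ (u n) ≤ Q̃ v`; the same law applied to `v ± (u n - v)`
gives the converse. Pointwise convergence itself follows from energy convergence and convergence
at `o` by walking along paths, as each edge controls `b x y (w x - w y)²` by `2 Q̃ w`. -/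

open Topology

lemma ENNReal.limsup_add_liminf_le {ι : Type*} {f : Filter ι} [f.NeBot] (u v : ι → ℝ≥0∞) :
    limsup u f + liminf v f ≤ limsup (u + v) f := by
  have hmono : Monotone ((↑) : ℝ≥0∞ → EReal) :=
    fun _ _ h => EReal.coe_ennreal_le_coe_ennreal_iff.mpr h
  have hcont : Continuous ((↑) : ℝ≥0∞ → EReal) := continuous_coe_ennreal_ereal
  rw [← EReal.coe_ennreal_le_coe_ennreal_iff, EReal.coe_ennreal_add,
    hmono.map_limsup_of_continuousAt _ hcont.continuousAt,
    hmono.map_liminf_of_continuousAt _ hcont.continuousAt,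
    hmono.map_limsup_of_continuousAt _ hcont.continuousAt]
  exact EReal.le_limsup_add.trans_eq (by congr 1; ext; simp)

lemma ENNReal.limsup_le_of_limsup_add_le {ι : Type*} {f : Filter ι} [f.NeBot]
    {u v : ι → ℝ≥0∞} {a c : ℝ≥0∞} (hc : c ≠ ⊤) (hv : c ≤ liminf v f)
    (h : limsup (u + v) f ≤ a + c) : limsup u f ≤ a := by
  refine (ENNReal.add_le_add_iff_right hc).1 ?_
  calc limsup u f + c ≤ limsup u f + liminf v f := by gcongr
    _ ≤ limsup (u + v) f := ENNReal.limsup_add_liminf_le u v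
    _ ≤ a + c := h

lemma tendsto_zero_of_tendsto_sq {ι : Type*} {l : Filter ι} {f : ι → ℝ}
    (h : Tendsto (fun i => f i ^ 2) l (𝓝 0)) : Tendsto f l (𝓝 0) := by
  rw [tendsto_zero_iff_abs_tendsto_zero]
  simpa only [Real.sqrt_sq_eq_abs, Real.sqrt_zero, Function.comp_def] using h.sqrt

section Parallelogram

variable {X : Type*} [AddCommGroup X]

def ParallelogramLaw (E : X → ℝ≥0∞) : Prop :=
  ∀ x y, E (x + y) + E (x - y) = 2 * E x + 2 * E y

namespace ParallelogramLaw

variable {E : X → ℝ≥0∞} (hE : ParallelogramLaw E)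
include hE

lemma map_sub_lt_top {x y : X} (hx : E x ≠ ⊤) (hy : E y ≠ ⊤) : E (x - y) < ⊤ :=
  calc E (x - y) ≤ E (x + y) + E (x - y) := le_add_self
    _ = 2 * E x + 2 * E y := hE x y
    _ < ⊤ := by finiteness

lemma map_zero {x : X} (hx : E x ≠ ⊤) : E 0 = 0 := by
  have hfin : E 0 ≠ ⊤ := by
    intro htop
    have h := hE x x
    rw [sub_self, htop, add_top] at h
    exact absurd h.symm (by finiteness)
  have h := hE 0 0
  rw [add_zero, sub_zero] at h
  have h' : 2 * E 0 + 0 = 2 * E 0 + 2 * E 0 := by rw [add_zero, ← h, two_mul]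
  simpa using ((ENNReal.add_right_inj (by finiteness)).1 h').symm

lemma map_add_self {x : X} (hx : E x ≠ ⊤) : E (x + x) = 4 * E x := by
  have h := hE x x
  rw [sub_self, hE.map_zero hx, add_zero] at h
  rw [h]; ring

variable [TopologicalSpace X] [IsTopologicalAddGroup X]

lemma tendsto_sub_iff_limsup_le (hlsc : LowerSemicontinuous E) {u : ℕ → X} {v : X}
    (hu : Tendsto u atTop (𝓝 v)) (hv : E v ≠ ⊤) :
    Tendsto (fun n => E (u n - v)) atTop (𝓝 0) ↔ limsup (E ∘ u) atTop ≤ E v := by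
  have lsc_along {w : ℕ → X} {x : X} (hw : Tendsto w atTop (𝓝 x)) :
      E x ≤ liminf (E ∘ w) atTop :=
    (hlsc.le_liminf x).trans hw.liminf_le_liminf_comp
  constructor
  · intro h
    have hsum : E ∘ u + E ∘ (fun n => v - (u n - v)) =
        fun n => 2 * E v + 2 * E (u n - v) := by
      ext n
      simpa using hE v (u n - v)
    refine ENNReal.limsup_le_of_limsup_add_le hv
      (lsc_along (by simpa using tendsto_const_nhds.sub (hu.sub_const v))) (le_of_eq ?_)
    rw [hsum, ← two_mul]
    have hlim : Tendsto (fun n => 2 * E v + 2 * E (u n - v)) atTop (𝓝 (2 * E v + 2 * 0)) :=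
      tendsto_const_nhds.add (ENNReal.Tendsto.const_mul h (Or.inr (by simp)))
    simpa using hlim.limsup_eq
  · intro h
    have hsum : (fun n => E (u n - v)) + (fun n => E (u n + v)) =
        fun n => 2 * E (u n) + 2 * E v := by
      ext n
      simpa [add_comm] using hE (u n) v
    refine tendsto_of_le_liminf_of_limsup_le zero_le
      (ENNReal.limsup_le_of_limsup_add_le (by finiteness : 4 * E v ≠ ⊤)
        ((hE.map_add_self hv).symm.trans_le (lsc_along (hu.add_const v))) ?_)
    calc limsup ((fun n => E (u n - v)) + (fun n => E (u n + v))) atTop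
        = 2 * limsup (E ∘ u) atTop + 2 * E v := by
          rw [hsum, limsup_add_const _ _ _ (by isBoundedDefault) (by isBoundedDefault),
            ENNReal.limsup_const_mul_of_ne_top (by simp)]
          rfl
      _ ≤ 2 * E v + 2 * E v := by gcongr
      _ = 0 + 4 * E v := by ring

end ParallelogramLaw

end Parallelogram

lemma ENNReal.tsum_ofReal_parallelogram {ι : Type*} {w : ι → ℝ} (hw : ∀ i, 0 ≤ w i)
    (f g : ι → ℝ) :
    ∑' i, ENNReal.ofReal (w i * (f i + g i) ^ 2)
        + ∑' i, ENNReal.ofReal (w i * (f i - g i) ^ 2) =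
      2 * ∑' i, ENNReal.ofReal (w i * f i ^ 2) + 2 * ∑' i, ENNReal.ofReal (w i * g i ^ 2) := by
  rw [← ENNReal.tsum_add, ← ENNReal.tsum_mul_left, ← ENNReal.tsum_mul_left,
    ← ENNReal.tsum_add]
  refine tsum_congr fun i => ?_
  have hsq (t : ℝ) : 0 ≤ w i * t ^ 2 := mul_nonneg (hw i) (sq_nonneg t)
  rw [← ENNReal.ofReal_add (hsq _) (hsq _), ← ENNReal.ofReal_ofNat 2,
    ← ENNReal.ofReal_mul zero_le_two, ← ENNReal.ofReal_mul zero_le_two,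
    ← ENNReal.ofReal_add (mul_nonneg zero_le_two (hsq _)) (mul_nonneg zero_le_two (hsq _))]
  congr 1
  ring

namespace WeightedGraph

variable {V : Type*} (G : WeightedGraph V)

lemma parallelogramLaw_energy : ParallelogramLaw G.energy := by
  intro u v
  have hb := ENNReal.tsum_ofReal_parallelogram (w := fun p : V × V => G.b p.1 p.2)
    (fun p => G.b_nonneg _ _) (fun p => u p.1 - u p.2) (fun p => v p.1 - v p.2)
  have hc := ENNReal.tsum_ofReal_parallelogram G.c_nonneg u v
  simp only [energy, Pi.add_apply, Pi.sub_apply, add_sub_add_comm, sub_sub_sub_comm]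
  calc _ = 1 / 2 *
          (∑' p : V × V, ENNReal.ofReal (G.b p.1 p.2 * (u p.1 - u p.2 + (v p.1 - v p.2)) ^ 2)
            + ∑' p : V × V, ENNReal.ofReal (G.b p.1 p.2 * (u p.1 - u p.2 - (v p.1 - v p.2)) ^ 2))
        + (∑' x, ENNReal.ofReal (G.c x * (u x + v x) ^ 2)
          + ∑' x, ENNReal.ofReal (G.c x * (u x - v x) ^ 2)) := by ring
    _ = _ := by rw [hb, hc]; ring

lemma lowerSemicontinuous_energy : LowerSemicontinuous G.energy := by
  unfold energy
  simp_rw [← ENNReal.tsum_mul_left]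
  exact (lowerSemicontinuous_tsum fun p => Continuous.lowerSemicontinuous
      ((ENNReal.continuous_const_mul (by simp)).comp (ENNReal.continuous_ofReal.comp
        (by fun_prop)))).add
    (lowerSemicontinuous_tsum fun x => Continuous.lowerSemicontinuous
      (ENNReal.continuous_ofReal.comp (by fun_prop)))

lemma ofReal_mul_sq_sub_le_two_mul_energy (u : V → ℝ) (x y : V) :
    ENNReal.ofReal (G.b x y * (u x - u y) ^ 2) ≤ 2 * G.energy u :=
  calc ENNReal.ofReal (G.b x y * (u x - u y) ^ 2)
      = 2 * (1 / 2 * ENNReal.ofReal (G.b x y * (u x - u y) ^ 2)) := by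
        rw [← mul_assoc, one_div, ENNReal.mul_inv_cancel two_ne_zero ENNReal.ofNat_ne_top,
          one_mul]
    _ ≤ 2 * G.energy u := by
        gcongr
        exact le_add_right (by gcongr; exact ENNReal.le_tsum (f := fun p : V × V =>
          ENNReal.ofReal (G.b p.1 p.2 * (u p.1 - u p.2) ^ 2)) (x, y))

lemma sq_sub_le_energy_toReal {u : V → ℝ} (hu : G.energy u ≠ ⊤) {x y : V}
    (hb : 0 < G.b x y) :
    (u x - u y) ^ 2 ≤ 2 * (G.energy u).toReal / G.b x y := by
  have h := ENNReal.toReal_mono (by finiteness) (G.ofReal_mul_sq_sub_le_two_mul_energy u x y)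
  rw [ENNReal.toReal_ofReal (by positivity), ENNReal.toReal_mul, ENNReal.toReal_ofNat] at h
  rw [le_div_iff₀ hb]
  linarith

variable {G}

lemma tendsto_sub_apply_of_tendsto_energy {d : ℕ → V → ℝ}
    (hfin : ∀ n, G.energy (d n) ≠ ⊤)
    (hE : Tendsto (fun n => (G.energy (d n)).toReal) atTop (𝓝 0)) {x y : V} (hb : 0 < G.b x y) :
    Tendsto (fun n => d n x - d n y) atTop (𝓝 0) := by
  refine tendsto_zero_of_tendsto_sq (squeeze_zero (fun n => sq_nonneg _)
    (fun n => G.sq_sub_le_energy_toReal (hfin n) hb) ?_)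
  simpa using (hE.const_mul 2).div_const (G.b x y)

lemma Connected.tendsto_apply_of_tendsto_energy (hG : G.Connected) {d : ℕ → V → ℝ}
    (hfin : ∀ n, G.energy (d n) ≠ ⊤)
    (hE : Tendsto (fun n => (G.energy (d n)).toReal) atTop (𝓝 0)) {o : V}
    (ho : Tendsto (fun n => d n o) atTop (𝓝 0)) (x : V) :
    Tendsto (fun n => d n x) atTop (𝓝 0) := by
  obtain ⟨k, p, rfl, rfl, hp⟩ := hG o x
  suffices ∀ i ≤ k, Tendsto (fun n => d n (p i)) atTop (𝓝 0) from this k le_rfl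
  intro i
  induction i with
  | zero => exact fun _ => ho
  | succ i ih =>
    intro hi
    simpa using (ih (by omega)).sub (tendsto_sub_apply_of_tendsto_energy hfin hE (hp i (by omega)))

end WeightedGraph

theorem yamasaki_convergence_iff_general {V : Type*} (G : WeightedGraph V)
    (hconn : G.Connected) (o : V) (u : ℕ → V → ℝ) (v : V → ℝ)
    (hu : ∀ n, G.FiniteEnergy (u n)) (hv : G.FiniteEnergy v) :
    Filter.Tendsto (fun n => G.ydistSq o (u n) v) Filter.atTop (nhds 0) ↔
      ((∀ x, Filter.Tendsto (fun n => u n x) Filter.atTop (nhds (v x))) ∧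
        Filter.limsup (fun n => G.energy (u n)) Filter.atTop ≤ G.energy v) := by
  have hfin : ∀ n, G.energy (u n - v) ≠ ⊤ :=
    fun n => (G.parallelogramLaw_energy.map_sub_lt_top (hu n).ne hv.ne).ne
  have key (hpt : Tendsto u atTop (𝓝 v)) := G.parallelogramLaw_energy.tendsto_sub_iff_limsup_le
    G.lowerSemicontinuous_energy hpt hv.ne
  change Tendsto (fun n => (G.energy (u n - v)).toReal + ((u n - v) o) ^ 2) atTop (𝓝 0) ↔ _
  rw [← tendsto_pi_nhds]
  constructor
  · intro h
    have hE : Tendsto (fun n => (G.energy (u n - v)).toReal) atTop (𝓝 0) :=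
      squeeze_zero (fun _ => ENNReal.toReal_nonneg)
        (fun _ => le_add_of_nonneg_right (sq_nonneg _)) h
    have ho : Tendsto (fun n => (u n - v) o) atTop (𝓝 0) := tendsto_zero_of_tendsto_sq
      (squeeze_zero (fun _ => sq_nonneg _) (fun _ => le_add_of_nonneg_left ENNReal.toReal_nonneg) h)
    have hpt : Tendsto u atTop (𝓝 v) := tendsto_pi_nhds.2 fun x => by
      simpa using (hconn.tendsto_apply_of_tendsto_energy hfin hE ho x).add_const (v x)
    refine ⟨hpt, (key hpt).1 ?_⟩
    exact (ENNReal.tendsto_toReal_iff hfin ENNReal.zero_ne_top).1 (by simpa using hE)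
  · rintro ⟨hpt, hls⟩
    have hE := (ENNReal.tendsto_toReal ENNReal.zero_ne_top).comp ((key hpt).2 hls)
    have ho := ((tendsto_pi_nhds.1 hpt o).sub_const (v o)).pow 2
    simpa using hE.add ho

/-- convergence criterion in the Yamasaki space: `‖u_n - u‖_o → 0` iff
`u_n → u` pointwise and `limsup Q̃(u_n) ≤ Q̃(u)`. -/
theorem yamasaki_convergence_iff {V : Type*} [Countable V] (G : WeightedGraph V)
    (hconn : G.Connected) (o : V) (u : ℕ → V → ℝ) (v : V → ℝ)
    (hu : ∀ n, G.FiniteEnergy (u n)) (hv : G.FiniteEnergy v) :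
    Filter.Tendsto (fun n => G.ydistSq o (u n) v) Filter.atTop (nhds 0) ↔
      ((∀ x, Filter.Tendsto (fun n => u n x) Filter.atTop (nhds (v x))) ∧
        Filter.limsup (fun n => G.energy (u n)) Filter.atTop ≤ G.energy v) :=
  yamasaki_convergence_iff_general G hconn o u v hu hv
end

section
/- Let (b,0) be connected (c ≡ 0), and suppose e_n ∈ D̃ with ‖e_n - 1‖_o → 0. Then for any u ∈ D̃ with 0 ≤ u ≤ 1, one has ‖e_n ∧ u - u‖_o → 0, where (e_n ∧ u)(x) = min(e_n(x), u(x)). -/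
open scoped ENNReal NNReal BigOperators
open MeasureTheory Filter

/-! Convergence in the Yamasaki norm (with `c ≡ 0`) makes the edge differences of `e n` tend to
`0`; together with `e n o → 1` and connectedness this gives `e n → 1` pointwise. On an edge, the
difference `r` of `min (e n) u - u` satisfies `|r| ≤ |δ| + |τ|` with `δ`, `τ` the differences of
`e n` and `u`, hence `b r² ≤ 4 b δ² + min (b r²) (4 b τ²)`. The first part has total mass
`4 · edgeEnergy (e n) → 0`; the second tends to `0` edgewise under the summable bound `4 b τ²`,
so dominated convergence finishes the proof. -/

open Topology

lemma abs_min_sub_sub_min_sub_le (a₁ a₂ t₁ t₂ : ℝ) :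
    |(min a₁ t₁ - t₁) - (min a₂ t₂ - t₂)| ≤ |a₁ - a₂| + |t₁ - t₂| := by
  rw [← min_sub_sub_right a₁ t₁ t₁, ← min_sub_sub_right a₂ t₂ t₂, sub_self, sub_self]
  calc |min (a₁ - t₁) 0 - min (a₂ - t₂) 0|
      ≤ max |a₁ - t₁ - (a₂ - t₂)| |(0 : ℝ) - 0| := abs_min_sub_min_le_max _ _ _ _
    _ = |(a₁ - a₂) - (t₁ - t₂)| := by
        rw [sub_self, abs_zero, max_eq_left (abs_nonneg _)]; ring_nf
    _ ≤ |a₁ - a₂| + |t₁ - t₂| := abs_sub _ _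

lemma sq_le_four_mul_sq_add_min {r d t : ℝ} (h : |r| ≤ |d| + |t|) :
    r ^ 2 ≤ 4 * d ^ 2 + min (r ^ 2) (4 * t ^ 2) := by
  rcases le_total |d| |t| with hdt | htd
  · have : r ^ 2 ≤ 4 * t ^ 2 := by
      rw [← sq_abs r, ← sq_abs t]; nlinarith [abs_nonneg r, abs_nonneg d]
    rw [min_eq_left this]; nlinarith [sq_nonneg d]
  · have : r ^ 2 ≤ 4 * d ^ 2 := by
      rw [← sq_abs r, ← sq_abs d]; nlinarith [abs_nonneg r, abs_nonneg t]
    exact le_add_of_le_of_nonneg this (le_min (sq_nonneg r) (by positivity))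

lemma ENNReal.tendsto_tsum_of_dominated_convergence {ι : Type*} {F : ℕ → ι → ℝ≥0∞}
    {f : ι → ℝ≥0∞} (bound : ι → ℝ≥0∞) (h_bound : ∀ n i, F n i ≤ bound i)
    (h_fin : ∑' i, bound i ≠ ∞) (h_lim : ∀ i, Tendsto (fun n => F n i) atTop (𝓝 (f i))) :
    Tendsto (fun n => ∑' i, F n i) atTop (𝓝 (∑' i, f i)) := by
  let _ : MeasurableSpace ι := ⊤
  have : MeasurableSingletonClass ι := ⟨fun _ => trivial⟩
  simp only [← lintegral_count] at h_fin ⊢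
  exact tendsto_lintegral_of_dominated_convergence bound (fun _ => measurable_from_top)
    (fun n => .of_forall (h_bound n)) h_fin (.of_forall h_lim)

lemma ENNReal.tendsto_tsum_zero_of_le_add {ι : Type*} {F A B : ℕ → ι → ℝ≥0∞}
    (bound : ι → ℝ≥0∞) (hF : ∀ n i, F n i ≤ A n i + B n i)
    (hA : Tendsto (fun n => ∑' i, A n i) atTop (𝓝 0)) (hB_le : ∀ n i, B n i ≤ bound i)
    (h_fin : ∑' i, bound i ≠ ∞) (hB : ∀ i, Tendsto (fun n => B n i) atTop (𝓝 0)) :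
    Tendsto (fun n => ∑' i, F n i) atTop (𝓝 0) := by
  have hB_sum : Tendsto (fun n => ∑' i, B n i) atTop (𝓝 0) := by
    simpa using ENNReal.tendsto_tsum_of_dominated_convergence bound hB_le h_fin hB
  refine tendsto_of_tendsto_of_tendsto_of_le_of_le tendsto_const_nhds
    (by simpa using hA.add hB_sum) (fun _ => zero_le) fun n => ?_
  rw [← ENNReal.tsum_add]
  exact ENNReal.tsum_le_tsum (hF n)

lemma ENNReal.ofReal_mul_sq_le_four_mul_add_min {β r d t : ℝ} (hβ : 0 ≤ β)
    (h : |r| ≤ |d| + |t|) :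
    ENNReal.ofReal (β * r ^ 2) ≤ 4 * ENNReal.ofReal (β * d ^ 2) +
      min (ENNReal.ofReal (β * r ^ 2)) (4 * ENNReal.ofReal (β * t ^ 2)) := by
  calc ENNReal.ofReal (β * r ^ 2)
      ≤ ENNReal.ofReal (4 * (β * d ^ 2) + min (β * r ^ 2) (4 * (β * t ^ 2))) := by
        refine ENNReal.ofReal_le_ofReal ?_
        rw [mul_left_comm 4 β (t ^ 2), mul_left_comm 4 β (d ^ 2), ← mul_min_of_nonneg _ _ hβ,
          ← mul_add]
        exact mul_le_mul_of_nonneg_left (sq_le_four_mul_sq_add_min h) hβ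
    _ = _ := by
        rw [ENNReal.ofReal_add (by positivity) (le_min (by positivity) (by positivity)),
          ENNReal.ofReal_min, ENNReal.ofReal_mul (p := 4) (by norm_num),
          ENNReal.ofReal_mul (p := 4) (by norm_num)]
        simp

namespace WeightedGraph

variable {V ι : Type*} (G : WeightedGraph V) {l : Filter ι}

noncomputable def edgeEnergy (w : V → ℝ) : ℝ≥0∞ :=
  ∑' p : V × V, ENNReal.ofReal (G.b p.1 p.2 * (w p.1 - w p.2) ^ 2)

theorem energy_eq_half_edgeEnergy (hc : ∀ x, G.c x = 0) (w : V → ℝ) :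
    G.energy w = 1 / 2 * G.edgeEnergy w := by
  simp [energy, edgeEnergy, hc]

theorem edgeEnergy_sub_const (w : V → ℝ) (a : ℝ) :
    G.edgeEnergy (fun x => w x - a) = G.edgeEnergy w := by
  simp only [edgeEnergy, sub_sub_sub_cancel_right]

theorem tendsto_energy_zero_iff (hc : ∀ x, G.c x = 0) {w : ι → V → ℝ} :
    Tendsto (fun i => G.energy (w i)) l (𝓝 0) ↔
      Tendsto (fun i => G.edgeEnergy (w i)) l (𝓝 0) := by
  simp only [G.energy_eq_half_edgeEnergy hc]
  refine ⟨fun h => ?_, fun h => by simpa using ENNReal.Tendsto.const_mul h (by simp)⟩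
  simpa [← mul_assoc, ENNReal.mul_inv_cancel] using
    ENNReal.Tendsto.const_mul (a := 2) h (by simp)

theorem ofReal_mul_sq_le_two_mul_energy (w : V → ℝ) (x y : V) :
    ENNReal.ofReal (G.b x y * (w x - w y) ^ 2) ≤ 2 * G.energy w := by
  calc ENNReal.ofReal (G.b x y * (w x - w y) ^ 2)
      ≤ ∑' p : V × V, ENNReal.ofReal (G.b p.1 p.2 * (w p.1 - w p.2) ^ 2) :=
        ENNReal.le_tsum (x, y)
    _ = 2 * (1 / 2 * ∑' p : V × V, ENNReal.ofReal (G.b p.1 p.2 * (w p.1 - w p.2) ^ 2)) := by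
        rw [← mul_assoc, one_div, ENNReal.mul_inv_cancel (by simp) (by simp), one_mul]
    _ ≤ 2 * G.energy w := by gcongr; exact le_self_add

theorem tendsto_sub_of_tendsto_energy {w : ι → V → ℝ}
    (h : Tendsto (fun i => G.energy (w i)) l (𝓝 0)) {x y : V} (hxy : 0 < G.b x y) :
    Tendsto (fun i => w i x - w i y) l (𝓝 0) := by
  have hedge : Tendsto (fun i => ENNReal.ofReal (G.b x y * (w i x - w i y) ^ 2)) l (𝓝 0) :=
    tendsto_of_tendsto_of_tendsto_of_le_of_le tendsto_const_nhds
      (by simpa using ENNReal.Tendsto.const_mul h (by simp)) (fun _ => zero_le)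
      fun i => G.ofReal_mul_sq_le_two_mul_energy (w i) x y
  rw [← ENNReal.tendsto_toReal_zero_iff] at hedge
  simp (disch := positivity) only [ENNReal.toReal_ofReal] at hedge
  refine tendsto_zero_of_tendsto_sq ?_
  simpa [hxy.ne'] using hedge.const_mul (G.b x y)⁻¹

theorem Connected.tendsto_of_tendsto_sub {G : WeightedGraph V} (hconn : G.Connected)
    {f : ι → V → ℝ} {o : V} {a : ℝ} (ho : Tendsto (fun i => f i o) l (𝓝 a))
    (hedge : ∀ x y, 0 < G.b x y → Tendsto (fun i => f i x - f i y) l (𝓝 0)) (x : V) :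
    Tendsto (fun i => f i x) l (𝓝 a) := by
  obtain ⟨k, p, rfl, rfl, hp⟩ := hconn o x
  suffices ∀ j ≤ k, Tendsto (fun i => f i (p j)) l (𝓝 a) from this k le_rfl
  intro j hj
  induction j with
  | zero => exact ho
  | succ j ih =>
    simpa using (ih (by omega)).sub (hedge _ _ (hp j hj))

theorem tendsto_ydistSq_zero_iff {o : V} {f : ι → V → ℝ} {v : V → ℝ} :
    Tendsto (fun i => G.ydistSq o (f i) v) l (𝓝 0) ↔
      Tendsto (fun i => (G.energy fun x => f i x - v x).toReal) l (𝓝 0) ∧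
        Tendsto (fun i => f i o) l (𝓝 (v o)) := by
  simp only [ydistSq]
  constructor
  · intro h
    refine ⟨squeeze_zero (fun _ => ENNReal.toReal_nonneg)
      (fun _ => le_add_of_nonneg_right (sq_nonneg _)) h,
      tendsto_sub_nhds_zero_iff.1 (tendsto_zero_of_tendsto_sq ?_)⟩
    exact squeeze_zero (fun _ => sq_nonneg _)
      (fun _ => le_add_of_nonneg_left ENNReal.toReal_nonneg) h
  · rintro ⟨hE, ho⟩
    simpa using hE.add ((tendsto_sub_nhds_zero_iff.2 ho).pow 2)

theorem finiteEnergy_iff (hc : ∀ x, G.c x = 0) (w : V → ℝ) :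
    G.FiniteEnergy w ↔ G.edgeEnergy w ≠ ∞ := by
  simp [FiniteEnergy, G.energy_eq_half_edgeEnergy hc, lt_top_iff_ne_top, ENNReal.mul_eq_top]

theorem tendsto_edgeEnergy_min_sub {e : ℕ → V → ℝ} {u : V → ℝ} {a : ℝ}
    (he : Tendsto (fun n => G.edgeEnergy (e n)) atTop (𝓝 0))
    (he_lim : ∀ x, Tendsto (fun n => e n x) atTop (𝓝 a)) (hu : G.edgeEnergy u ≠ ∞)
    (hua : ∀ x, u x ≤ a) :
    Tendsto (fun n => G.edgeEnergy fun x => min (e n x) (u x) - u x) atTop (𝓝 0) := by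
  refine ENNReal.tendsto_tsum_zero_of_le_add
    (fun p => 4 * ENNReal.ofReal (G.b p.1 p.2 * (u p.1 - u p.2) ^ 2))
    (A := fun n p => 4 * ENNReal.ofReal (G.b p.1 p.2 * (e n p.1 - e n p.2) ^ 2))
    (fun n p => ENNReal.ofReal_mul_sq_le_four_mul_add_min (G.b_nonneg _ _)
      (abs_min_sub_sub_min_sub_le _ _ _ _))
    ?_ (fun _ _ => min_le_right _ _) ?_ fun p => ?_
  · simpa [edgeEnergy, ENNReal.tsum_mul_left] using ENNReal.Tendsto.const_mul he (by simp)
  · rw [ENNReal.tsum_mul_left]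
    exact ENNReal.mul_ne_top (by simp) hu
  · have hmin (x : V) : Tendsto (fun n => min (e n x) (u x) - u x) atTop (𝓝 0) := by
      simpa [min_eq_right (hua x)] using
        ((he_lim x).min (tendsto_const_nhds (x := u x))).sub_const (u x)
    have hterm := (((hmin p.1).sub (hmin p.2)).pow 2).const_mul (G.b p.1 p.2)
    simpa using (ENNReal.tendsto_ofReal hterm).min tendsto_const_nhds

end WeightedGraph

theorem min_with_approx_one_converges_general {V : Type*} (G : WeightedGraph V)
    (hconn : G.Connected) (hc : ∀ x, G.c x = 0) (o : V)
    (e : ℕ → V → ℝ) (he : ∀ n, G.FiniteEnergy (e n))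
    (helim : Filter.Tendsto (fun n => G.ydistSq o (e n) (fun _ => 1)) Filter.atTop (nhds 0))
    (u : V → ℝ) (hu : G.FiniteEnergy u) (h01 : ∀ x, 0 ≤ u x ∧ u x ≤ 1) :
    Filter.Tendsto (fun n => G.ydistSq o (fun x => min (e n x) (u x)) u)
      Filter.atTop (nhds 0) := by
  obtain ⟨hE_toReal, ho⟩ := G.tendsto_ydistSq_zero_iff.1 helim
  have hE : Tendsto (fun n => G.energy fun x => e n x - 1) atTop (𝓝 0) := by
    refine (ENNReal.tendsto_toReal_zero_iff fun n => ?_).1 hE_toReal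
    have hfin : G.FiniteEnergy fun x => e n x - 1 := by
      rw [G.finiteEnergy_iff hc, G.edgeEnergy_sub_const, ← G.finiteEnergy_iff hc]
      exact he n
    exact hfin.ne
  have hlim : ∀ x, Tendsto (fun n => e n x) atTop (𝓝 1) :=
    hconn.tendsto_of_tendsto_sub ho fun x y hxy => by
      simpa using G.tendsto_sub_of_tendsto_energy hE hxy
  have hedge : Tendsto (fun n => G.edgeEnergy (e n)) atTop (𝓝 0) := by
    simpa only [G.edgeEnergy_sub_const] using (G.tendsto_energy_zero_iff hc).1 hE
  refine G.tendsto_ydistSq_zero_iff.2 ⟨?_, ?_⟩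
  · have hmin := (G.tendsto_energy_zero_iff hc).2 <| G.tendsto_edgeEnergy_min_sub hedge hlim
      ((G.finiteEnergy_iff hc u).1 hu) fun x => (h01 x).2
    simpa [Function.comp_def] using (ENNReal.tendsto_toReal ENNReal.zero_ne_top).comp hmin
  · simpa [min_eq_right (h01 o).2] using (hlim o).min (tendsto_const_nhds (x := u o))

/-- if `c ≡ 0`, `e_n → 1` in the Yamasaki space and `0 ≤ u ≤ 1` has finite
energy, then `e_n ∧ u → u` in the Yamasaki space. -/
theorem min_with_approx_one_converges {V : Type*} [Countable V] (G : WeightedGraph V)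
    (hconn : G.Connected) (hc : ∀ x, G.c x = 0) (o : V)
    (e : ℕ → V → ℝ) (he : ∀ n, G.FiniteEnergy (e n))
    (helim : Filter.Tendsto (fun n => G.ydistSq o (e n) (fun _ => 1)) Filter.atTop (nhds 0))
    (u : V → ℝ) (hu : G.FiniteEnergy u) (h01 : ∀ x, 0 ≤ u x ∧ u x ≤ 1) :
    Filter.Tendsto (fun n => G.ydistSq o (fun x => min (e n x) (u x)) u)
      Filter.atTop (nhds 0) :=
  min_with_approx_one_converges_general G hconn hc o e he helim u hu h01
end
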